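/- Minorization condition for the Bayesian group lasso Gibbs sampler. Let n ≥ 1, p ≥ 1, y ∈ ℝⁿ, X a real n×p matrix, λ > 0, α, ξ ≥ 0 and d > 0. Fix K ≥ 1 and a partition of {1,…,p} into groups G₁,…,G_K of sizes m₁,…,m_K with ∑ m_k = p. Set d₁ = 2d/λ, R = d + 2ξ + K²λ²d₁² = d + 2ξ + 4K²d², and ε = e^{−1/2} · ((yᵀy − yᵀX(XᵀX + (λ²/(4d))I_p)⁻¹Xᵀy + 2ξ)/R)^{(n+p)/2+α}. Then for every starting point (β₀, τ₀², σ₀²) with V_BGL(β₀, τ₀², σ₀²) ≤ d, and for every (β, τ², σ²) ∈ ℝᵖ × (0,∞)^K × (0,∞), the Gibbs transition density satisfies k(β, τ², σ²) ≥ ε · φ_p(β; A_τ⁻¹Xᵀy, σ²A_τ⁻¹) · h_{(n+p)/2+α, R/2}(σ²) · ∏_{k=1}^K g_{λ, d₁, σ}(τ²_k), where σ = √(σ²), A_τ = XᵀX + D_τ⁻¹, and k(β, τ², σ²) = φ_p(β; A_τ⁻¹Xᵀy, σ²A_τ⁻¹) · ∏_{k=1}^K g_{λ, ‖β₀,G_k‖,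 σ}(τ²_k) · h_{(n+p)/2+α, B₀/2}(σ²) with B₀ = (y − Xβ₀)ᵀ(y − Xβ₀) + β₀ᵀD_{τ₀}⁻¹β₀ + 2ξ. -/
import Mathlib


open Matrix MeasureTheory Real

/-- `N_p(μ, σ²A⁻¹)` density expressed through the precision-type matrix `A`:
`φ_p(β; μ, σ²A⁻¹) = (2πσ²)^{−p/2}(det A)^{1/2} exp(−(β−μ)ᵀA(β−μ)/(2σ²))`. -/
noncomputable def gaussDens (p : ℕ) (A : Matrix (Fin p) (Fin p) ℝ) (μ : Fin p → ℝ)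
    (s : ℝ) (β : Fin p → ℝ) : ℝ :=
  (2 * Real.pi * s) ^ (-(p : ℝ) / 2) * Real.sqrt A.det *
    Real.exp (-((β - μ) ⬝ᵥ (A *ᵥ (β - μ))) / (2 * s))

/-- Density of the reciprocal of an Inverse-Gaussian(λσ/|a|, λ²) variable:
`g_{λ,a,σ}(x) = (λ/√(2π)) exp(λ|a|/σ) x^{−1/2} exp(−λ²x/2 − a²/(2σ²x))`. -/
noncomputable def gDens (lam a σ x : ℝ) : ℝ :=
  lam / Real.sqrt (2 * Real.pi) * Real.exp (lam * |a| / σ) * x ^ (-(1 : ℝ) / 2) *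
    Real.exp (-(lam ^ 2 * x) / 2 - a ^ 2 / (2 * σ ^ 2 * x))

/-- Inverse-Gamma(a,b) density: `h_{a,b}(x) = (bᵃ/Γ(a)) x^{−a−1} e^{−b/x}`. -/
noncomputable def igamDens (a b x : ℝ) : ℝ :=
  b ^ a / Real.Gamma a * x ^ (-a - 1) * Real.exp (-b / x)

/-- `‖β_{G_k}‖ = √(β_{G_k}ᵀβ_{G_k})`, where group membership is recorded by
`grp : Fin p → Fin K` (`grp i = k` iff coordinate `i` lies in group `G_k`). -/
noncomputable def groupNorm (p K : ℕ) (grp : Fin p → Fin K) (β : Fin p → ℝ)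
    (k : Fin K) : ℝ :=
  Real.sqrt (∑ i ∈ Finset.univ.filter (fun i => grp i = k), β i ^ 2)

/-- `m_k`, the size of group `G_k`. -/
def groupSize (p K : ℕ) (grp : Fin p → Fin K) (k : Fin K) : ℕ :=
  (Finset.univ.filter (fun i => grp i = k)).card

/-- `M = max_k m_k`. -/
def maxGroupSize (p K : ℕ) (grp : Fin p → Fin K) : ℕ :=
  Finset.univ.sup (groupSize p K grp)

/-- Drift function for the Bayesian group lasso:
`V_BGL(β,τ²) = (y−Xβ)ᵀ(y−Xβ) + βᵀD_τ⁻¹β + (λ²/4)∑_k τ²_k`, where `D_τ` is the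
diagonal matrix repeating `τ²_k` along the coordinates of group `G_k`
(it does not depend on σ²). -/
noncomputable def VBGL (n p K : ℕ) (y : Fin n → ℝ) (X : Matrix (Fin n) (Fin p) ℝ)
    (lam : ℝ) (grp : Fin p → Fin K) (β : Fin p → ℝ) (τ : Fin K → ℝ) : ℝ :=
  (y - X *ᵥ β) ⬝ᵥ (y - X *ᵥ β)
    + β ⬝ᵥ ((Matrix.diagonal fun i => (τ (grp i))⁻¹) *ᵥ β)
    + lam ^ 2 / 4 * ∑ k, τ k

/-- Gibbs transition density for the Bayesian group lasso started at `(β₀, τ₀², σ₀²)`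
and evaluated at `x = (β, τ², σ²)`:
`k = φ_p(β; A_τ⁻¹Xᵀy, σ²A_τ⁻¹) ∏_k g_{λ,‖β₀,G_k‖,σ}(τ²_k) h_{(n+p)/2+α, B₀/2}(σ²)`
with `σ = √σ²`, `A_τ = XᵀX + D_τ⁻¹` and
`B₀ = (y−Xβ₀)ᵀ(y−Xβ₀) + β₀ᵀD_{τ₀}⁻¹β₀ + 2ξ`. -/
noncomputable def kBGL (n p K : ℕ) (y : Fin n → ℝ) (X : Matrix (Fin n) (Fin p) ℝ)
    (lam α ξ : ℝ) (grp : Fin p → Fin K) (β₀ : Fin p → ℝ) (τ₀ : Fin K → ℝ)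
    (x : (Fin p → ℝ) × (Fin K → ℝ) × ℝ) : ℝ :=
  gaussDens p (Xᵀ * X + Matrix.diagonal fun i => (x.2.1 (grp i))⁻¹)
      ((Xᵀ * X + Matrix.diagonal fun i => (x.2.1 (grp i))⁻¹)⁻¹ *ᵥ (Xᵀ *ᵥ y)) x.2.2 x.1
    * (∏ k, gDens lam (groupNorm p K grp β₀ k) (Real.sqrt x.2.2) (x.2.1 k))
    * igamDens (((n : ℝ) + p) / 2 + α)
        (((y - X *ᵥ β₀) ⬝ᵥ (y - X *ᵥ β₀)
            + β₀ ⬝ᵥ ((Matrix.diagonal fun i => (τ₀ (grp i))⁻¹) *ᵥ β₀) + 2 * ξ) / 2)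
        x.2.2

/- ### auxiliary lemmas -/

lemma dot_self_nonneg' {m : ℕ} (v : Fin m → ℝ) : 0 ≤ v ⬝ᵥ v :=
  Finset.sum_nonneg fun _ _ => mul_self_nonneg _

lemma quad_min {n p : ℕ} (y : Fin n → ℝ) (X : Matrix (Fin n) (Fin p) ℝ) (c : ℝ) (hc : 0 < c) :
    (0 ≤ y ⬝ᵥ y - y ⬝ᵥ (X *ᵥ ((Xᵀ * X + c • (1 : Matrix (Fin p) (Fin p) ℝ))⁻¹ *ᵥ (Xᵀ *ᵥ y)))) ∧
    ∀ β : Fin p → ℝ, y ⬝ᵥ y - y ⬝ᵥ (X *ᵥ ((Xᵀ * X + c • (1 : Matrix (Fin p) (Fin p) ℝ))⁻¹ *ᵥ (Xᵀ *ᵥ y)))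
      ≤ (y - X *ᵥ β) ⬝ᵥ (y - X *ᵥ β) + c * (β ⬝ᵥ β) := by
  set A : Matrix (Fin p) (Fin p) ℝ := Xᵀ * X + c • 1 with hAdef
  have h1 : (Xᵀ * X).PosSemidef := by
    simpa [conjTranspose_eq_transpose_of_trivial] using posSemidef_conjTranspose_mul_self X
  have h2 : (c • (1 : Matrix (Fin p) (Fin p) ℝ)).PosDef := by
    rw [smul_one_eq_diagonal]
    exact (posDef_diagonal_iff).mpr fun _ => hc
  have hA : A.PosDef := Matrix.PosDef.posSemidef_add h1 h2
  have hdet : IsUnit A.det := hA.det_pos.ne'.isUnit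
  set u : Fin p → ℝ := A⁻¹ *ᵥ (Xᵀ *ᵥ y) with hu
  have hAu' : Xᵀ *ᵥ (X *ᵥ u) + c • u = Xᵀ *ᵥ y := by
    have hAu : A *ᵥ u = Xᵀ *ᵥ y := by
      rw [hu, Matrix.mulVec_mulVec, Matrix.mul_nonsing_inv _ hdet, Matrix.one_mulVec]
    rw [← hAu, hAdef, Matrix.add_mulVec, Matrix.smul_mulVec, Matrix.one_mulVec,
      ← Matrix.mulVec_mulVec]
  have key : ∀ v : Fin p → ℝ, (X *ᵥ v) ⬝ᵥ (X *ᵥ u) + c * (v ⬝ᵥ u) = (X *ᵥ v) ⬝ᵥ y := by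
    intro v
    have h := congrArg (fun w => v ⬝ᵥ w) hAu'
    simp only [dotProduct_add, dotProduct_smul, smul_eq_mul,
      Matrix.dotProduct_mulVec, Matrix.vecMul_transpose] at h
    rwa [← Matrix.dotProduct_mulVec] at h
  have expand : ∀ (m : ℕ) (v w : Fin m → ℝ),
      (v - w) ⬝ᵥ (v - w) = v ⬝ᵥ v - 2 * (v ⬝ᵥ w) + w ⬝ᵥ w := by
    intro m v w
    simp only [dotProduct_sub, sub_dotProduct, dotProduct_comm w v]
    ring
  have e2 := key u
  constructor
  · have h0 : 0 ≤ (y - X *ᵥ u) ⬝ᵥ (y - X *ᵥ u) + c * (u ⬝ᵥ u) :=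
      add_nonneg (dot_self_nonneg' _) (mul_nonneg hc.le (dot_self_nonneg' _))
    rw [expand] at h0
    rw [dotProduct_comm y (X *ᵥ u)] at h0 ⊢
    linarith [e2]
  · intro β
    have e1 := key β
    have h0 : 0 ≤ (X *ᵥ (β - u)) ⬝ᵥ (X *ᵥ (β - u)) + c * ((β - u) ⬝ᵥ (β - u)) :=
      add_nonneg (dot_self_nonneg' _) (mul_nonneg hc.le (dot_self_nonneg' _))
    rw [Matrix.mulVec_sub, expand, expand] at h0
    rw [expand]
    rw [dotProduct_comm y (X *ᵥ u), dotProduct_comm y (X *ᵥ β)]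
    nlinarith [e1, e2, h0]

lemma gDens_nonneg (lam a σ x : ℝ) (hlam : 0 ≤ lam) (hx : 0 < x) : 0 ≤ gDens lam a σ x := by
  unfold gDens
  positivity

lemma gDens_bound (lam σ x a₀ d₁ : ℝ) (hlam : 0 < lam) (hσ : 0 < σ) (hx : 0 < x)
    (ha₀ : 0 ≤ a₀) (h : a₀ ≤ d₁) :
    Real.exp (-(lam * d₁) / σ) * gDens lam d₁ σ x ≤ gDens lam a₀ σ x := by
  unfold gDens
  rw [abs_of_nonneg ha₀, abs_of_nonneg (ha₀.trans h)]
  have hexp : Real.exp (-(lam * d₁) / σ) * (Real.exp (lam * d₁ / σ) *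
        Real.exp (-(lam ^ 2 * x) / 2 - d₁ ^ 2 / (2 * σ ^ 2 * x)))
      ≤ Real.exp (lam * a₀ / σ) * Real.exp (-(lam ^ 2 * x) / 2 - a₀ ^ 2 / (2 * σ ^ 2 * x)) := by
    rw [← Real.exp_add, ← Real.exp_add, ← Real.exp_add]
    apply Real.exp_le_exp.mpr
    have h1 : a₀ ^ 2 / (2 * σ ^ 2 * x) ≤ d₁ ^ 2 / (2 * σ ^ 2 * x) := by
      gcongr
    have h2 : 0 ≤ lam * a₀ / σ := by positivity
    have h3 : -(lam * d₁) / σ + lam * d₁ / σ = 0 := by ring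
    linarith
  calc Real.exp (-(lam * d₁) / σ) *
        (lam / Real.sqrt (2 * Real.pi) * Real.exp (lam * d₁ / σ) * x ^ (-(1 : ℝ) / 2) *
          Real.exp (-(lam ^ 2 * x) / 2 - d₁ ^ 2 / (2 * σ ^ 2 * x)))
      = (lam / Real.sqrt (2 * Real.pi) * x ^ (-(1 : ℝ) / 2)) *
          (Real.exp (-(lam * d₁) / σ) * (Real.exp (lam * d₁ / σ) *
            Real.exp (-(lam ^ 2 * x) / 2 - d₁ ^ 2 / (2 * σ ^ 2 * x)))) := by ring
    _ ≤ (lam / Real.sqrt (2 * Real.pi) * x ^ (-(1 : ℝ) / 2)) *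
          (Real.exp (lam * a₀ / σ) * Real.exp (-(lam ^ 2 * x) / 2 - a₀ ^ 2 / (2 * σ ^ 2 * x))) := by
        apply mul_le_mul_of_nonneg_left hexp (by positivity)
    _ = lam / Real.sqrt (2 * Real.pi) * Real.exp (lam * a₀ / σ) * x ^ (-(1 : ℝ) / 2) *
          Real.exp (-(lam ^ 2 * x) / 2 - a₀ ^ 2 / (2 * σ ^ 2 * x)) := by ring

lemma igam_bound (a C B R Kd s : ℝ) (ha : 0 < a) (hC : 0 ≤ C) (hCB : C ≤ B)
    (hBR : B + 4 * Kd ^ 2 ≤ R) (hR : 0 < R) (hs : 0 < s) :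
    Real.exp (-(1 / 2) : ℝ) * ((C / R) ^ a * igamDens a (R / 2) s)
      ≤ Real.exp (-(2 * Kd) / Real.sqrt s) * igamDens a (B / 2) s := by
  unfold igamDens
  have hΓ : 0 < Real.Gamma a := Real.Gamma_pos_of_pos ha
  have hB : 0 ≤ B := hC.trans hCB
  have hmul : (C / R) ^ a * (R / 2) ^ a = (C / 2) ^ a := by
    rw [← Real.mul_rpow (by positivity) (by positivity)]
    congr 1
    field_simp
  set t := Real.sqrt s with htdef
  have ht : 0 < t := Real.sqrt_pos.mpr hs
  have ht2 : t ^ 2 = s := Real.sq_sqrt hs.le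
  have hexp : Real.exp (-(1 / 2) : ℝ) * Real.exp (-(R / 2) / s)
      ≤ Real.exp (-(2 * Kd) / t) * Real.exp (-(B / 2) / s) := by
    rw [← Real.exp_add, ← Real.exp_add]
    apply Real.exp_le_exp.mpr
    rw [← ht2]
    have expand : (-(2 * Kd) / t + -(B / 2) / t ^ 2) - (-(1 / 2 : ℝ) + -(R / 2) / t ^ 2)
        = (t ^ 2 - 4 * Kd * t + (R - B)) / (2 * t ^ 2) := by
      field_simp
      ring
    have hnum : 0 ≤ (t ^ 2 - 4 * Kd * t + (R - B)) / (2 * t ^ 2) :=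
      div_nonneg (by nlinarith [sq_nonneg (t - 2 * Kd)]) (by positivity)
    linarith [expand ▸ hnum]
  have hpow : (C / 2) ^ a ≤ (B / 2) ^ a :=
    Real.rpow_le_rpow (by positivity) (by linarith) ha.le
  calc Real.exp (-(1 / 2) : ℝ) * ((C / R) ^ a * ((R / 2) ^ a / Real.Gamma a * s ^ (-a - 1) *
          Real.exp (-(R / 2) / s)))
      = (s ^ (-a - 1) / Real.Gamma a) * (((C / R) ^ a * (R / 2) ^ a) *
          (Real.exp (-(1 / 2) : ℝ) * Real.exp (-(R / 2) / s))) := by ring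
    _ = (s ^ (-a - 1) / Real.Gamma a) * ((C / 2) ^ a *
          (Real.exp (-(1 / 2) : ℝ) * Real.exp (-(R / 2) / s))) := by rw [hmul]
    _ ≤ (s ^ (-a - 1) / Real.Gamma a) * ((B / 2) ^ a *
          (Real.exp (-(2 * Kd) / t) * Real.exp (-(B / 2) / s))) := by
        have hsr : (0:ℝ) ≤ s ^ (-a - 1) := (Real.rpow_pos_of_pos hs _).le
        apply mul_le_mul_of_nonneg_left ?_ (by positivity)
        apply mul_le_mul hpow hexp (by positivity) (by positivity)
    _ = Real.exp (-(2 * Kd) / t) * ((B / 2) ^ a / Real.Gamma a * s ^ (-a - 1) *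
          Real.exp (-(B / 2) / s)) := by ring

set_option maxHeartbeats 2000000 in
/-- minorization condition for the Bayesian group lasso Gibbs sampler.
With `d₁ = 2d/λ`, `R = d + 2ξ + K²λ²d₁²` and
`ε = e^{−1/2}((yᵀy − yᵀX(XᵀX + (λ²/(4d))I_p)⁻¹Xᵀy + 2ξ)/R)^{(n+p)/2+α}`, for every
starting point in the small set `{V_BGL ≤ d}` and every state `(β, τ², σ²)`,
`k(β,τ²,σ²) ≥ ε φ_p(β; A_τ⁻¹Xᵀy, σ²A_τ⁻¹) h_{(n+p)/2+α,R/2}(σ²)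
∏_k g_{λ,d₁,σ}(τ²_k)`. -/
theorem groupLasso_minorization_condition (n p K : ℕ) (hn : 1 ≤ n) (hp : 1 ≤ p)
    (hK : 1 ≤ K) (y : Fin n → ℝ) (X : Matrix (Fin n) (Fin p) ℝ) (lam α ξ d : ℝ)
    (hlam : 0 < lam) (hα : 0 ≤ α) (hξ : 0 ≤ ξ) (hd : 0 < d)
    (grp : Fin p → Fin K) (hmono : Monotone grp) (hsurj : Function.Surjective grp)
    (β₀ : Fin p → ℝ) (τ₀ : Fin K → ℝ) (s₀ : ℝ)
    (hτ₀ : ∀ k, 0 < τ₀ k) (hs₀ : 0 < s₀)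
    (hsmall : VBGL n p K y X lam grp β₀ τ₀ ≤ d)
    (β : Fin p → ℝ) (τ : Fin K → ℝ) (s : ℝ) (hτ : ∀ k, 0 < τ k) (hs : 0 < s) :
    Real.exp (-(1 / 2))
        * ((y ⬝ᵥ y
              - y ⬝ᵥ (X *ᵥ ((Xᵀ * X + (lam ^ 2 / (4 * d)) • (1 : Matrix (Fin p) (Fin p) ℝ))⁻¹
                  *ᵥ (Xᵀ *ᵥ y)))
              + 2 * ξ)
            / (d + 2 * ξ + K ^ 2 * lam ^ 2 * (2 * d / lam) ^ 2)) ^ (((n : ℝ) + p) / 2 + α)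
        * (gaussDens p (Xᵀ * X + Matrix.diagonal fun i => (τ (grp i))⁻¹)
              ((Xᵀ * X + Matrix.diagonal fun i => (τ (grp i))⁻¹)⁻¹ *ᵥ (Xᵀ *ᵥ y)) s β
            * igamDens (((n : ℝ) + p) / 2 + α)
                ((d + 2 * ξ + K ^ 2 * lam ^ 2 * (2 * d / lam) ^ 2) / 2) s
            * (∏ k, gDens lam (2 * d / lam) (Real.sqrt s) (τ k)))
      ≤ kBGL n p K y X lam α ξ grp β₀ τ₀ (β, τ, s) := by
  have hlamne : lam ≠ 0 := hlam.ne'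
  simp only [kBGL]
  unfold VBGL at hsmall
  set a : ℝ := ((n : ℝ) + p) / 2 + α with hadef
  have ha : 0 < a := by
    have h1 : (1:ℝ) ≤ (n:ℝ) := by exact_mod_cast hn
    have h2 : (1:ℝ) ≤ (p:ℝ) := by exact_mod_cast hp
    rw [hadef]; nlinarith
  set Q1 := (y - X *ᵥ β₀) ⬝ᵥ (y - X *ᵥ β₀) with hQ1def
  set Q2 := β₀ ⬝ᵥ ((Matrix.diagonal fun i => (τ₀ (grp i))⁻¹) *ᵥ β₀) with hQ2def
  have hQ1 : 0 ≤ Q1 := dot_self_nonneg' _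
  have hQ2eq : Q2 = ∑ i, (τ₀ (grp i))⁻¹ * β₀ i ^ 2 := by
    rw [hQ2def]
    simp only [dotProduct, Matrix.mulVec_diagonal]
    exact Finset.sum_congr rfl fun i _ => by ring
  have hQ2 : 0 ≤ Q2 := by
    rw [hQ2eq]
    exact Finset.sum_nonneg fun i _ => by have := hτ₀ (grp i); positivity
  have hS : 0 ≤ ∑ k, τ₀ k := Finset.sum_nonneg fun k _ => (hτ₀ k).le
  have hQd : Q1 + Q2 ≤ d := by
    nlinarith [mul_nonneg (by positivity : (0:ℝ) ≤ lam ^ 2 / 4) hS]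
  have hτ₀' : ∀ k, τ₀ k ≤ 4 * d / lam ^ 2 := by
    intro k
    have h1 : τ₀ k ≤ ∑ j, τ₀ j :=
      Finset.single_le_sum (fun j _ => (hτ₀ j).le) (Finset.mem_univ k)
    rw [le_div_iff₀ (by positivity)]
    nlinarith
  have hgn : ∀ k, groupNorm p K grp β₀ k ≤ 2 * d / lam := by
    intro k
    unfold groupNorm
    have hky : 0 ≤ 2 * d / lam := by positivity
    rw [show 2 * d / lam = Real.sqrt ((2 * d / lam) ^ 2) from (Real.sqrt_sq hky).symm]
    apply Real.sqrt_le_sqrt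
    have h1 : ∑ i ∈ Finset.univ.filter (fun i => grp i = k), β₀ i ^ 2
        = τ₀ k * ∑ i ∈ Finset.univ.filter (fun i => grp i = k), (τ₀ (grp i))⁻¹ * β₀ i ^ 2 := by
      rw [Finset.mul_sum]
      apply Finset.sum_congr rfl
      intro i hi
      have hik : grp i = k := by simpa using (Finset.mem_filter.mp hi).2
      rw [hik]
      have := (hτ₀ k).ne'
      field_simp
    have h2 : ∑ i ∈ Finset.univ.filter (fun i => grp i = k), (τ₀ (grp i))⁻¹ * β₀ i ^ 2 ≤ Q2 := by
      rw [hQ2eq]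
      apply Finset.sum_le_sum_of_subset_of_nonneg (Finset.filter_subset _ _)
      intro i _ _
      have := hτ₀ (grp i); positivity
    have hQ2d : Q2 ≤ d := by linarith
    calc ∑ i ∈ Finset.univ.filter (fun i => grp i = k), β₀ i ^ 2
        = τ₀ k * ∑ i ∈ Finset.univ.filter (fun i => grp i = k), (τ₀ (grp i))⁻¹ * β₀ i ^ 2 := h1
      _ ≤ τ₀ k * Q2 := mul_le_mul_of_nonneg_left h2 (hτ₀ k).le
      _ ≤ τ₀ k * d := mul_le_mul_of_nonneg_left hQ2d (hτ₀ k).le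
      _ ≤ (4 * d / lam ^ 2) * d := mul_le_mul_of_nonneg_right (hτ₀' k) hd.le
      _ = (2 * d / lam) ^ 2 := by field_simp; ring
  set c : ℝ := lam ^ 2 / (4 * d) with hcdef
  have hc : 0 < c := by rw [hcdef]; positivity
  obtain ⟨hC0', hCle⟩ := quad_min y X c hc
  have hcb : c * (β₀ ⬝ᵥ β₀) ≤ Q2 := by
    rw [hQ2eq, dotProduct, Finset.mul_sum]
    apply Finset.sum_le_sum
    intro i _
    have h1 : c ≤ (τ₀ (grp i))⁻¹ := by
      rw [hcdef, show lam ^ 2 / (4 * d) = (4 * d / lam ^ 2)⁻¹ from by rw [inv_div]]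
      exact inv_anti₀ (hτ₀ (grp i)) (hτ₀' (grp i))
    nlinarith [mul_le_mul_of_nonneg_right h1 (sq_nonneg (β₀ i))]
  set C : ℝ := y ⬝ᵥ y
      - y ⬝ᵥ (X *ᵥ ((Xᵀ * X + c • (1 : Matrix (Fin p) (Fin p) ℝ))⁻¹ *ᵥ (Xᵀ *ᵥ y)))
      + 2 * ξ with hCdef
  have hC0 : 0 ≤ C := by rw [hCdef]; linarith
  have hCB : C ≤ Q1 + Q2 + 2 * ξ := by
    have := hCle β₀
    rw [hCdef]; linarith
  set R : ℝ := d + 2 * ξ + K ^ 2 * lam ^ 2 * (2 * d / lam) ^ 2 with hRdef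
  have hReq : R = d + 2 * ξ + 4 * ((K : ℝ) * d) ^ 2 := by
    rw [hRdef]; push_cast; field_simp; ring
  have hR : 0 < R := by rw [hReq]; positivity
  have hBR : (Q1 + Q2 + 2 * ξ) + 4 * ((K : ℝ) * d) ^ 2 ≤ R := by
    rw [hReq]; nlinarith
  have hσ : 0 < Real.sqrt s := Real.sqrt_pos.mpr hs
  have hΓ : 0 < Real.Gamma a := Real.Gamma_pos_of_pos ha
  -- product bound
  have prodb : Real.exp (-(2 * ((K : ℝ) * d)) / Real.sqrt s)
        * ∏ k, gDens lam (2 * d / lam) (Real.sqrt s) (τ k)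
      ≤ ∏ k, gDens lam (groupNorm p K grp β₀ k) (Real.sqrt s) (τ k) := by
    have hprod : ∏ k, (Real.exp (-(lam * (2 * d / lam)) / Real.sqrt s)
          * gDens lam (2 * d / lam) (Real.sqrt s) (τ k))
        ≤ ∏ k, gDens lam (groupNorm p K grp β₀ k) (Real.sqrt s) (τ k) := by
      apply Finset.prod_le_prod
      · intro k _
        exact mul_nonneg (Real.exp_nonneg _) (gDens_nonneg _ _ _ _ hlam.le (hτ k))
      · intro k _
        exact gDens_bound lam _ _ _ _ hlam hσ (hτ k) (Real.sqrt_nonneg _) (hgn k)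
    calc Real.exp (-(2 * ((K : ℝ) * d)) / Real.sqrt s)
          * ∏ k, gDens lam (2 * d / lam) (Real.sqrt s) (τ k)
        = ∏ k : Fin K, (Real.exp (-(lam * (2 * d / lam)) / Real.sqrt s)
            * gDens lam (2 * d / lam) (Real.sqrt s) (τ k)) := by
          rw [Finset.prod_mul_distrib, Finset.prod_const, Finset.card_univ, Fintype.card_fin,
            ← Real.exp_nat_mul]
          congr 1
          rw [show lam * (2 * d / lam) = 2 * d from by field_simp]
          ring
      _ ≤ _ := hprod
  have igam_b := igam_bound a C (Q1 + Q2 + 2 * ξ) R ((K : ℝ) * d) s ha hC0 hCB hBR hR hs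
  set φ := gaussDens p (Xᵀ * X + Matrix.diagonal fun i => (τ (grp i))⁻¹)
      ((Xᵀ * X + Matrix.diagonal fun i => (τ (grp i))⁻¹)⁻¹ *ᵥ (Xᵀ *ᵥ y)) s β with hφdef
  have hφ : 0 ≤ φ := by
    rw [hφdef]; unfold gaussDens
    have := Real.pi_pos
    positivity
  set Pd := ∏ k, gDens lam (2 * d / lam) (Real.sqrt s) (τ k) with hPddef
  have hPd : 0 ≤ Pd :=
    Finset.prod_nonneg fun k _ => gDens_nonneg _ _ _ _ hlam.le (hτ k)
  have hH : 0 ≤ igamDens a ((Q1 + Q2 + 2 * ξ) / 2) s := by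
    unfold igamDens
    have h1 : (0:ℝ) ≤ (Q1 + Q2 + 2 * ξ) / 2 := by linarith
    positivity
  calc Real.exp (-(1 / 2)) * (C / R) ^ a * (φ * igamDens a (R / 2) s * Pd)
      = φ * ((Real.exp (-(1 / 2) : ℝ) * ((C / R) ^ a * igamDens a (R / 2) s)) * Pd) := by ring
    _ ≤ φ * ((Real.exp (-(2 * ((K : ℝ) * d)) / Real.sqrt s)
          * igamDens a ((Q1 + Q2 + 2 * ξ) / 2) s) * Pd) :=
        mul_le_mul_of_nonneg_left (mul_le_mul_of_nonneg_right igam_b hPd) hφ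
    _ = φ * (igamDens a ((Q1 + Q2 + 2 * ξ) / 2) s
          * (Real.exp (-(2 * ((K : ℝ) * d)) / Real.sqrt s) * Pd)) := by ring
    _ ≤ φ * (igamDens a ((Q1 + Q2 + 2 * ξ) / 2) s
          * ∏ k, gDens lam (groupNorm p K grp β₀ k) (Real.sqrt s) (τ k)) :=
        mul_le_mul_of_nonneg_left (mul_le_mul_of_nonneg_left prodb hH) hφ
    _ = φ * (∏ k, gDens lam (groupNorm p K grp β₀ k) (Real.sqrt s) (τ k))
          * igamDens a ((Q1 + Q2 + 2 * ξ) / 2) s := by ring
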